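/- Let l_{12}, l_{13}, l_{14}, l_{23}, l_{24}, l_{34} be positive reals (indexed by the two-element subsets of {1,2,3,4}), and set c_{ij} = cosh(l_{ij}), s_{ij} = sinh(l_{ij}). For distinct i,j,k in {1,2,3,4}, the quantity (c_{ij} c_{ik} + c_{jk})/(s_{ij} s_{ik}) is strictly greater than 1, so one may define x^i_{jk} = arcosh((c_{ij} c_{ik} + c_{jk})/(s_{ij} s_{ik})), i.e. the unique nonnegative real whose cosh equals this quantity. Then for every permutation {i,j,k,h} of {1,2,3,4}: (cosh(x^i_{jk}) cosh(x^i_{jh}) − cosh(x^i_{kh}))/(sinh(x^i_{jk}) sinh(x^i_{jh})) = (c_{ik} c_{ih} + c_{jk} c_{jh} + c_{ij} c_{ik} c_{jh} + c_{ij} c_{ih} c_{jk} − s_{ij}^2 c_{kh}) / (√(2 c_{ij} c_{ik} c_{jk} + c_{ij}^2 + c_{ik}^2 + c_{jk}^2 − 1) · √(2 c_{ij} c_{ih} c_{jh} + c_{ij}^2 + c_{ih}^2 + c_{jh}^2 − 1)). In particular, the left-hand side is unchanged when i and j are exchanged. -/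

import Mathlib

open Real

/-- The quantity `(c_ij c_ik + c_jk)/(s_ij s_ik)` whose arcosh is the vertex-edge
length `x^i_{jk}` of a hyper-ideal tetrahedron with edge lengths `l`. -/
noncomputable def coshVertexEdge (l : Fin 4 → Fin 4 → ℝ) (i j k : Fin 4) : ℝ :=
  (Real.cosh (l i j) * Real.cosh (l i k) + Real.cosh (l j k)) /
    (Real.sinh (l i j) * Real.sinh (l i k))

/-! With `a = c_ij`, `b = c_ik`, `c = c_jk`, the identity
`(a b + c)² - (a² - 1)(b² - 1) = 2abc + a² + b² + c² - 1` gives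
`sinh x^i_{jk} = √(2abc + a² + b² + c² - 1) / (s_ij s_ik)`. Substituting this and the defining
values of `cosh x^i_{jk}`, the formula becomes a rational identity that holds once
`s_ij² = c_ij² - 1` is used. Since `l_ij = l_ji`, its right-hand side is symmetric in `i` and `j`,
which gives the exchange property. -/

/-- Minus the determinant of the Gram matrix `!![1, -a, -b; -a, 1, -c; -b, -c, 1]`. -/
def tripleGram (a b c : ℝ) : ℝ := 2 * a * b * c + a ^ 2 + b ^ 2 + c ^ 2 - 1

lemma tripleGram_swap (a b c : ℝ) : tripleGram a b c = tripleGram a c b := by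
  unfold tripleGram; ring

lemma tripleGram_cosh_pos (p q r : ℝ) : 0 < tripleGram (cosh p) (cosh q) (cosh r) := by
  have hpqr := mul_pos (mul_pos (cosh_pos p) (cosh_pos q)) (cosh_pos r)
  unfold tripleGram
  nlinarith [one_le_cosh p, sq_nonneg (cosh q), sq_nonneg (cosh r)]

lemma sinh_eq_sqrt_cosh_sq_sub_one {x : ℝ} (hx : 0 ≤ x) : sinh x = √(cosh x ^ 2 - 1) := by
  rw [← sinh_arcosh (one_le_cosh x), arcosh_cosh hx]

section VertexEdge

variable {l : Fin 4 → Fin 4 → ℝ} {i j k h : Fin 4}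

lemma one_lt_coshVertexEdge (hij : 0 < l i j) (hik : 0 < l i k) : 1 < coshVertexEdge l i j k := by
  have hs : 0 < sinh (l i j) * sinh (l i k) := mul_pos (sinh_pos_iff.2 hij) (sinh_pos_iff.2 hik)
  rw [coshVertexEdge, one_lt_div hs]
  linarith [cosh_sub (l i j) (l i k), one_le_cosh (l i j - l i k), cosh_pos (l j k)]

lemma coshVertexEdge_sq_sub_one (hij : 0 < l i j) (hik : 0 < l i k) :
    coshVertexEdge l i j k ^ 2 - 1 =
      tripleGram (cosh (l i j)) (cosh (l i k)) (cosh (l j k)) /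
        (sinh (l i j) * sinh (l i k)) ^ 2 := by
  have hs : sinh (l i j) * sinh (l i k) ≠ 0 :=
    (mul_pos (sinh_pos_iff.2 hij) (sinh_pos_iff.2 hik)).ne'
  rw [coshVertexEdge, div_pow, div_sub_one (pow_ne_zero 2 hs), tripleGram]
  congr 1
  linear_combination
    (1 - cosh (l i k) ^ 2) * sinh_sq (l i j) - sinh (l i j) ^ 2 * sinh_sq (l i k)

lemma sinh_eq_of_cosh_eq_coshVertexEdge (hij : 0 < l i j) (hik : 0 < l i k) {x : ℝ} (hx : 0 ≤ x)
    (hcosh : cosh x = coshVertexEdge l i j k) :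
    sinh x = √(tripleGram (cosh (l i j)) (cosh (l i k)) (cosh (l j k))) /
      (sinh (l i j) * sinh (l i k)) := by
  have hs : 0 < sinh (l i j) * sinh (l i k) := mul_pos (sinh_pos_iff.2 hij) (sinh_pos_iff.2 hik)
  rw [sinh_eq_sqrt_cosh_sq_sub_one hx, hcosh, coshVertexEdge_sq_sub_one hij hik,
    sqrt_div' _ (sq_nonneg _), sqrt_sq hs.le]

lemma dihedral_cos_eq (hij : 0 < l i j) (hik : 0 < l i k) (hih : 0 < l i h) {x y z : ℝ}
    (hx : 0 ≤ x) (hy : 0 ≤ y) (hxc : cosh x = coshVertexEdge l i j k)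
    (hyc : cosh y = coshVertexEdge l i j h) (hzc : cosh z = coshVertexEdge l i k h) :
    (cosh x * cosh y - cosh z) / (sinh x * sinh y) =
      (cosh (l i k) * cosh (l i h) + cosh (l j k) * cosh (l j h)
        + cosh (l i j) * cosh (l i k) * cosh (l j h)
        + cosh (l i j) * cosh (l i h) * cosh (l j k)
        - sinh (l i j) ^ 2 * cosh (l k h)) /
      (√(tripleGram (cosh (l i j)) (cosh (l i k)) (cosh (l j k))) *
        √(tripleGram (cosh (l i j)) (cosh (l i h)) (cosh (l j h)))) := by
  have hsij := (sinh_pos_iff.2 hij).ne'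
  have hsik := (sinh_pos_iff.2 hik).ne'
  have hsih := (sinh_pos_iff.2 hih).ne'
  have hq₁ := (sqrt_pos.2 (tripleGram_cosh_pos (l i j) (l i k) (l j k))).ne'
  have hq₂ := (sqrt_pos.2 (tripleGram_cosh_pos (l i j) (l i h) (l j h))).ne'
  rw [sinh_eq_of_cosh_eq_coshVertexEdge hij hik hx hxc,
    sinh_eq_of_cosh_eq_coshVertexEdge hij hih hy hyc, hxc, hyc, hzc]
  unfold coshVertexEdge
  field_simp
  linear_combination cosh (l i k) * cosh (l i h) * cosh_sq (l i j)

end VertexEdge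

theorem vertex_edge_dihedral_formula
    (l : Fin 4 → Fin 4 → ℝ)
    (hsym : ∀ i j, l i j = l j i)
    (hpos : ∀ i j, i ≠ j → 0 < l i j)
    -- `X i j k` is the unique nonnegative real whose cosh equals `coshVertexEdge l i j k`
    (X : Fin 4 → Fin 4 → Fin 4 → ℝ)
    (hX : ∀ i j k, i ≠ j → i ≠ k → j ≠ k →
      0 ≤ X i j k ∧ Real.cosh (X i j k) = coshVertexEdge l i j k) :
    -- the quantity is strictly greater than 1, so such an `X` indeed exists uniquely
    (∀ i j k, i ≠ j → i ≠ k → j ≠ k → 1 < coshVertexEdge l i j k) ∧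
    -- the main formula, for every permutation {i,j,k,h} of {1,2,3,4}
    (∀ i j k h : Fin 4, i ≠ j → i ≠ k → i ≠ h → j ≠ k → j ≠ h → k ≠ h →
      (Real.cosh (X i j k) * Real.cosh (X i j h) - Real.cosh (X i k h)) /
        (Real.sinh (X i j k) * Real.sinh (X i j h)) =
      (Real.cosh (l i k) * Real.cosh (l i h) + Real.cosh (l j k) * Real.cosh (l j h)
        + Real.cosh (l i j) * Real.cosh (l i k) * Real.cosh (l j h)
        + Real.cosh (l i j) * Real.cosh (l i h) * Real.cosh (l j k)
        - (Real.sinh (l i j)) ^ 2 * Real.cosh (l k h)) /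
      (Real.sqrt (2 * Real.cosh (l i j) * Real.cosh (l i k) * Real.cosh (l j k)
            + (Real.cosh (l i j)) ^ 2 + (Real.cosh (l i k)) ^ 2 + (Real.cosh (l j k)) ^ 2 - 1) *
        Real.sqrt (2 * Real.cosh (l i j) * Real.cosh (l i h) * Real.cosh (l j h)
            + (Real.cosh (l i j)) ^ 2 + (Real.cosh (l i h)) ^ 2 + (Real.cosh (l j h)) ^ 2 - 1))) ∧
    -- in particular, the left-hand side is unchanged when i and j are exchanged
    (∀ i j k h : Fin 4, i ≠ j → i ≠ k → i ≠ h → j ≠ k → j ≠ h → k ≠ h →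
      (Real.cosh (X i j k) * Real.cosh (X i j h) - Real.cosh (X i k h)) /
        (Real.sinh (X i j k) * Real.sinh (X i j h)) =
      (Real.cosh (X j i k) * Real.cosh (X j i h) - Real.cosh (X j k h)) /
        (Real.sinh (X j i k) * Real.sinh (X j i h))) := by
  have hl : ∀ {i j}, i ≠ j → 0 < l i j := hpos _ _
  have formula :
      ∀ i j k h : Fin 4, i ≠ j → i ≠ k → i ≠ h → j ≠ k → j ≠ h → k ≠ h → _ :=
    fun i j k h hij hik hih hjk hjh hkh =>
      dihedral_cos_eq (hl hij) (hl hik) (hl hih) (hX i j k hij hik hjk).1 (hX i j h hij hih hjh).1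
        (hX i j k hij hik hjk).2 (hX i j h hij hih hjh).2 (hX i k h hik hih hkh).2
  refine ⟨fun i j k hij hik _ => one_lt_coshVertexEdge (hl hij) (hl hik), formula, ?_⟩
  intro i j k h hij hik hih hjk hjh hkh
  rw [formula i j k h hij hik hih hjk hjh hkh, formula j i k h hij.symm hjk hjh hik hih hkh,
    hsym j i, tripleGram_swap (cosh (l i j)) (cosh (l j k)), tripleGram_swap _ (cosh (l j h))]
  ring
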